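/- For X, Y ∈ ℝ^{M×N} with K_X = X Xᵀ and K_Y = Y Yᵀ, the squared Bures distance Tr[K_X] + Tr[K_Y] − 2ℱ(K_X, K_Y) equals the squared Procrustes distance min_{QᵀQ=I} ‖X − Y Q‖_F². -/

import Mathlib

/-!
Expanding the square, `‖X - YQ‖_F² = Tr K_X + Tr K_Y - 2 Tr(XᵀY Q)` for orthogonal `Q`, so the
Procrustes problem asks for the maximum of `Tr(B Q)`, `B = XᵀY`. By the polar decomposition
`B = Q₀ |B|`, this maximum is `Tr |B|`, the nuclear norm of `B`: it is attained at `Q = Q₀ᵀ`,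
and `Tr(|B| R) ≤ Tr |B|` for orthogonal `R` because `0 ≤ ‖C - CR‖_F²` with `CᵀC = |B|`.
On the other side, `K_X^{1/2} K_Y K_X^{1/2} = AᵀA` and `|B|² = AAᵀ` for `A = Yᵀ K_X^{1/2}`, and
`Tr (AᵀA)^{1/2} = Tr (AAᵀ)^{1/2}`, so the fidelity is also `Tr |B|`.
-/

open Matrix

lemma real_conjTranspose_eq {m n : ℕ} (A : Matrix (Fin m) (Fin n) ℝ) : Aᴴ = Aᵀ := rfl

lemma psd_tmul {m n : ℕ} (A : Matrix (Fin m) (Fin n) ℝ) : (Aᵀ * A).PosSemidef := by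
  have h := Matrix.posSemidef_conjTranspose_mul_self A
  rwa [real_conjTranspose_eq] at h

lemma psd_gram {m n : ℕ} (A : Matrix (Fin m) (Fin n) ℝ) : (A * Aᵀ).PosSemidef := by
  have h := Matrix.posSemidef_self_mul_conjTranspose A
  rwa [real_conjTranspose_eq] at h

section OldSqrt
open scoped ComplexOrder

/-- The positive semidefinite square root of a positive semidefinite matrix
(the definition `Matrix.PosSemidef.sqrt` of the older Mathlib, removed since). -/
noncomputable def Matrix.PosSemidef.sqrt {n 𝕜 : Type*} [Fintype n] [DecidableEq n] [RCLike 𝕜]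
    {A : Matrix n n 𝕜} (hA : A.PosSemidef) : Matrix n n 𝕜 :=
  hA.1.eigenvectorUnitary.1 * diagonal ((↑) ∘ (√·) ∘ hA.1.eigenvalues) *
  (star hA.1.eigenvectorUnitary : Matrix n n 𝕜)

lemma Matrix.PosSemidef.posSemidef_sqrt {n 𝕜 : Type*} [Fintype n] [DecidableEq n] [RCLike 𝕜]
    {A : Matrix n n 𝕜} (hA : A.PosSemidef) : hA.sqrt.PosSemidef := by
  have hd : (diagonal ((↑) ∘ (√·) ∘ hA.1.eigenvalues : n → 𝕜)).PosSemidef := by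
    rw [Matrix.posSemidef_diagonal_iff]
    intro i
    simp only [Function.comp_apply]
    exact_mod_cast Real.sqrt_nonneg _
  exact hd.mul_mul_conjTranspose_same hA.1.eigenvectorUnitary.1

end OldSqrt

lemma psd_sand {M : ℕ} {Kx Ky : Matrix (Fin M) (Fin M) ℝ} (hx : Kx.PosSemidef) (hy : Ky.PosSemidef) :
    (hx.sqrt * Ky * hx.sqrt).PosSemidef := by
  have h := hy.mul_mul_conjTranspose_same hx.sqrt
  rwa [hx.posSemidef_sqrt.isHermitian.eq] at h

/-- Nuclear norm: sum of singular values, i.e. `Tr[(AᵀA)^{1/2}]`. -/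
noncomputable def nuclearNorm {m n : ℕ} (A : Matrix (Fin m) (Fin n) ℝ) : ℝ :=
  (Matrix.PosSemidef.sqrt (psd_tmul A)).trace

/-- Frobenius norm. -/
noncomputable def frobNorm {m n : ℕ} (A : Matrix (Fin m) (Fin n) ℝ) : ℝ :=
  Real.sqrt (Matrix.trace (Aᵀ * A))

/-- Fidelity `Tr[(Kx^{1/2} Ky Kx^{1/2})^{1/2}]` between PSD matrices. -/
noncomputable def fidelity {M : ℕ} {Kx Ky : Matrix (Fin M) (Fin M) ℝ}
    (hx : Kx.PosSemidef) (hy : Ky.PosSemidef) : ℝ :=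
  (Matrix.PosSemidef.sqrt (psd_sand hx hy)).trace

open Polynomial
open scoped RealInnerProductSpace

namespace Matrix

namespace PosSemidef

open scoped ComplexOrder

variable {n 𝕜 : Type*} [Fintype n] [DecidableEq n] [RCLike 𝕜] {A : Matrix n n 𝕜}

theorem sqrt_eq_cfc (hA : A.PosSemidef) : hA.sqrt = cfc Real.sqrt A := by
  rw [hA.1.cfc_eq, IsHermitian.cfc, Unitary.conjStarAlgAut_apply]
  rfl

theorem cfc_sqrt_mul_self (hA : A.PosSemidef) : cfc Real.sqrt A * cfc Real.sqrt A = A := by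
  rw [← cfc_mul Real.sqrt Real.sqrt A]
  conv_rhs => rw [← cfc_id' ℝ A hA.1.isSelfAdjoint]
  refine cfc_congr fun x hx => Real.mul_self_sqrt ?_
  obtain ⟨i, rfl⟩ := hA.1.spectrum_real_eq_range_eigenvalues ▸ hx
  exact hA.eigenvalues_nonneg i

end PosSemidef

section TraceMulComm

variable {R m n : Type*} [CommRing R] [Fintype m] [Fintype n] [DecidableEq m] [DecidableEq n]

theorem mul_pow_mul_comm (A : Matrix m n R) (B : Matrix n m R) (k : ℕ) :
    A * (B * A) ^ k = (A * B) ^ k * A := by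
  induction k with
  | zero => simp
  | succ k ih => rw [pow_succ, pow_succ, ← Matrix.mul_assoc, ih]; simp only [Matrix.mul_assoc]

theorem mul_aeval_mul_comm (A : Matrix m n R) (B : Matrix n m R) (p : R[X]) :
    A * aeval (B * A) p = aeval (A * B) p * A := by
  induction p using Polynomial.induction_on' with
  | add p q hp hq => rw [map_add, map_add, Matrix.mul_add, Matrix.add_mul, hp, hq]
  | monomial k c =>
    rw [aeval_monomial, aeval_monomial, ← Algebra.smul_def, ← Algebra.smul_def,
      Matrix.mul_smul, Matrix.smul_mul, mul_pow_mul_comm]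

theorem trace_aeval_mul_comm (A : Matrix m n R) (B : Matrix n m R) {p : R[X]}
    (hp : p.eval 0 = 0) : (aeval (B * A) p).trace = (aeval (A * B) p).trace := by
  obtain ⟨q, rfl⟩ : X ∣ p := X_dvd_iff.2 (by rwa [coeff_zero_eq_eval_zero])
  calc (aeval (B * A) (X * q)).trace = (B * (A * aeval (B * A) q)).trace := by
        rw [map_mul, aeval_X, Matrix.mul_assoc]
    _ = (aeval (A * B) q * A * B).trace := by rw [trace_mul_comm, mul_aeval_mul_comm]
    _ = (aeval (A * B) (X * q)).trace := by
        rw [map_mul, aeval_X, Matrix.mul_assoc, trace_mul_comm]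

theorem trace_cfc_transpose_mul_self (A : Matrix m n ℝ) {f : ℝ → ℝ} (hf : f 0 = 0) :
    (cfc f (Aᵀ * A)).trace = (cfc f (A * Aᵀ)).trace := by
  classical
  -- on both (finite) spectra and at `0`, `f` agrees with its Lagrange interpolant
  set s : Finset ℝ := insert 0 ((finite_real_spectrum (A := Aᵀ * A)).toFinset ∪
    (finite_real_spectrum (A := A * Aᵀ)).toFinset)
  set p := Lagrange.interpolate s id f
  have hp : ∀ x ∈ s, f x = p.eval x := fun x hx =>
    (Lagrange.eval_interpolate_at_node f Function.injective_id.injOn hx).symm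
  have hAA : IsSelfAdjoint (Aᵀ * A) := isHermitian_conjTranspose_mul_self A
  have hAA' : IsSelfAdjoint (A * Aᵀ) := isHermitian_mul_conjTranspose_self A
  have hp0 : p.eval 0 = 0 := by rw [← hp 0 (Finset.mem_insert_self _ _), hf]
  rw [cfc_congr (g := p.eval) fun x hx => hp x (by simp [s, hx]),
    cfc_congr (a := A * Aᵀ) (g := p.eval) fun x hx => hp x (by simp [s, hx]),
    cfc_polynomial p _ hAA, cfc_polynomial p _ hAA', trace_aeval_mul_comm _ _ hp0]

end TraceMulComm

variable {n : Type*} [Fintype n] [DecidableEq n]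

theorem exists_orthogonal_mul_diagonal_sqrt (C : Matrix n n ℝ) {d : n → ℝ}
    (hC : Cᵀ * C = diagonal d) :
    ∃ U : Matrix n n ℝ, Uᵀ * U = 1 ∧ C = U * diagonal (fun i => √(d i)) := by
  set c : n → EuclideanSpace ℝ n := fun i => WithLp.toLp 2 (Cᵀ i)
  have hinner : ∀ i j, ⟪c i, c j⟫ = diagonal d i j := fun i j => by
    rw [← hC, mul_apply', EuclideanSpace.inner_toLp_toLp, dotProduct_comm]
    rfl
  have hd : ∀ i, 0 ≤ d i := fun i => by
    have := real_inner_self_nonneg (x := c i)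
    rwa [hinner, diagonal_apply_eq] at this
  have hv : Orthonormal ℝ ({i | d i ≠ 0}.domRestrict fun i => (√(d i))⁻¹ • c i) := by
    rw [orthonormal_iff_ite]
    rintro ⟨i, hi⟩ ⟨j, hj⟩
    simp only [Set.domRestrict_apply, real_inner_smul_left, real_inner_smul_right, hinner,
      diagonal_apply, Subtype.mk.injEq]
    split_ifs with hij
    · subst hij
      have := Real.sqrt_pos.2 ((hd i).lt_of_ne' hi)
      field_simp
      rw [Real.sq_sqrt (hd i)]
    · simp
  obtain ⟨b, hb⟩ := hv.exists_orthonormalBasis_extension_of_card_eq (by simp)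
  have hcb : ∀ i, c i = √(d i) • b i := fun i => by
    by_cases hi : d i = 0
    · rw [hi, Real.sqrt_zero, zero_smul, ← inner_self_eq_zero (𝕜 := ℝ), hinner,
        diagonal_apply_eq, hi]
    · rw [hb i hi, smul_smul, mul_inv_cancel₀ (Real.sqrt_ne_zero'.2 ((hd i).lt_of_ne' hi)),
        one_smul]
  refine ⟨(EuclideanSpace.basisFun n ℝ).toBasis.toMatrix b.toBasis, ?_, ?_⟩
  · exact mem_unitaryGroup_iff'.mp
      ((EuclideanSpace.basisFun n ℝ).toMatrix_orthonormalBasis_mem_unitary b)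
  · ext j i
    have := congrArg (fun v : EuclideanSpace ℝ n => v j) (hcb i)
    simpa [mul_comm, c, Module.Basis.toMatrix_apply] using this

theorem exists_orthogonal_mul_cfc_sqrt (B : Matrix n n ℝ) :
    ∃ Q : Matrix n n ℝ, Qᵀ * Q = 1 ∧ B = Q * cfc Real.sqrt (Bᵀ * B) := by
  have hS : (Bᵀ * B).IsHermitian := isHermitian_conjTranspose_mul_self B
  set W : Matrix n n ℝ := hS.eigenvectorUnitary.1
  have hW : W * Wᵀ = 1 := mem_unitaryGroup_iff.mp hS.eigenvectorUnitary.2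
  have hW' : Wᵀ * W = 1 := mem_unitaryGroup_iff'.mp hS.eigenvectorUnitary.2
  have hdiag : (B * W)ᵀ * (B * W) = diagonal hS.eigenvalues := by
    have := hS.conjStarAlgAut_star_eigenvectorUnitary
    rw [Unitary.conjStarAlgAut_star_apply] at this
    simpa [W, transpose_mul, Matrix.mul_assoc, star_eq_conjTranspose,
      conjTranspose_eq_transpose_of_trivial] using this
  obtain ⟨U, hU, hBW⟩ := exists_orthogonal_mul_diagonal_sqrt (B * W) hdiag
  refine ⟨U * Wᵀ, ?_, ?_⟩
  · rw [transpose_mul, transpose_transpose, Matrix.mul_assoc, ← Matrix.mul_assoc Uᵀ, hU,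
      Matrix.one_mul, hW]
  · rw [hS.cfc_eq, IsHermitian.cfc, Unitary.conjStarAlgAut_apply]
    calc B = B * W * Wᵀ := by rw [Matrix.mul_assoc, hW, Matrix.mul_one]
      _ = U * Wᵀ * (W * diagonal (fun i => √(hS.eigenvalues i)) * Wᵀ) := by
        rw [hBW, Matrix.mul_assoc U Wᵀ, ← Matrix.mul_assoc Wᵀ, ← Matrix.mul_assoc Wᵀ, hW',
          Matrix.one_mul, Matrix.mul_assoc]
      _ = _ := rfl

theorem trace_transpose_mul_self_sub_mul {R m : Type*} [CommRing R] [Fintype m]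
    (X Y : Matrix m n R) {Q : Matrix n n R} (hQ : Qᵀ * Q = 1) :
    ((X - Y * Q)ᵀ * (X - Y * Q)).trace =
      (X * Xᵀ).trace + (Y * Yᵀ).trace - 2 * (Xᵀ * Y * Q).trace := by
  have hXX : (Xᵀ * X).trace = (X * Xᵀ).trace := trace_mul_comm _ _
  have hYQ : ((Y * Q)ᵀ * (Y * Q)).trace = (Y * Yᵀ).trace := by
    rw [transpose_mul, Matrix.mul_assoc, trace_mul_comm, Matrix.mul_assoc, Matrix.mul_assoc,
      mul_eq_one_comm.mp hQ, Matrix.mul_one, trace_mul_comm]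
  have hcross : ((Y * Q)ᵀ * X).trace = (Xᵀ * Y * Q).trace := by
    rw [← trace_transpose, transpose_mul, transpose_transpose, Matrix.mul_assoc]
  rw [transpose_sub, Matrix.sub_mul, Matrix.mul_sub, Matrix.mul_sub, trace_sub, trace_sub,
    trace_sub, hXX, hYQ, hcross, ← Matrix.mul_assoc]
  ring

theorem trace_transpose_mul_self_mul_le {m : Type*} [Fintype m] (C : Matrix m n ℝ)
    {R : Matrix n n ℝ} (hR : Rᵀ * R = 1) : (Cᵀ * C * R).trace ≤ (Cᵀ * C).trace := by
  have h : 0 ≤ ((C - C * R)ᵀ * (C - C * R)).trace :=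
    (posSemidef_conjTranspose_mul_self _).trace_nonneg
  rw [trace_transpose_mul_self_sub_mul C C hR, trace_mul_comm C] at h
  linarith

theorem PosSemidef.trace_mul_le_trace {P R : Matrix n n ℝ} (hP : P.PosSemidef)
    (hR : Rᵀ * R = 1) : (P * R).trace ≤ P.trace := by
  have hC : (cfc Real.sqrt P)ᵀ = cfc Real.sqrt P := (cfc_predicate Real.sqrt P).star_eq
  simpa only [hC, hP.cfc_sqrt_mul_self] using
    trace_transpose_mul_self_mul_le (cfc Real.sqrt P) hR

end Matrix

theorem frobNorm_sq {m n : ℕ} (A : Matrix (Fin m) (Fin n) ℝ) :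
    frobNorm A ^ 2 = (Aᵀ * A).trace :=
  Real.sq_sqrt (psd_tmul A).trace_nonneg

theorem fidelity_gram_eq_nuclearNorm {M N : ℕ} (X Y : Matrix (Fin M) (Fin N) ℝ) :
    fidelity (psd_gram X) (psd_gram Y) = nuclearNorm (Xᵀ * Y) := by
  set C := cfc Real.sqrt (X * Xᵀ)
  have hC : Cᵀ = C := (cfc_predicate Real.sqrt (X * Xᵀ)).star_eq
  have hCC : C * C = X * Xᵀ := (psd_gram X).cfc_sqrt_mul_self
  have hsand : C * (Y * Yᵀ) * C = (Yᵀ * C)ᵀ * (Yᵀ * C) := by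
    simp only [transpose_mul, transpose_transpose, hC, Matrix.mul_assoc]
  have hgram : (Yᵀ * C) * (Yᵀ * C)ᵀ = (Xᵀ * Y)ᵀ * (Xᵀ * Y) := by
    simp only [transpose_mul, transpose_transpose, hC, Matrix.mul_assoc, ← Matrix.mul_assoc C C,
      hCC]
  rw [fidelity, nuclearNorm, PosSemidef.sqrt_eq_cfc, PosSemidef.sqrt_eq_cfc,
    PosSemidef.sqrt_eq_cfc, hsand, trace_cfc_transpose_mul_self _ Real.sqrt_zero, hgram]

theorem isGreatest_nuclearNorm_trace_mul_orthogonal {N : ℕ} (B : Matrix (Fin N) (Fin N) ℝ) :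
    IsGreatest {t | ∃ Q : Matrix (Fin N) (Fin N) ℝ, Qᵀ * Q = 1 ∧ t = (B * Q).trace}
      (nuclearNorm B) := by
  obtain ⟨Q₀, hQ₀, hpolar⟩ := exists_orthogonal_mul_cfc_sqrt B
  have hP := (psd_tmul B).posSemidef_sqrt
  rw [nuclearNorm, (psd_tmul B).sqrt_eq_cfc] at *
  generalize cfc Real.sqrt (Bᵀ * B) = P at hpolar hP ⊢
  subst hpolar
  refine ⟨⟨Q₀ᵀ, by rw [transpose_transpose, mul_eq_one_comm.mp hQ₀], ?_⟩, ?_⟩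
  · rw [Matrix.mul_assoc, trace_mul_comm, Matrix.mul_assoc, hQ₀, Matrix.mul_one]
  · rintro _ ⟨Q, hQ, rfl⟩
    have hQQ₀ : (Q * Q₀)ᵀ * (Q * Q₀) = 1 := by
      rw [transpose_mul, Matrix.mul_assoc, ← Matrix.mul_assoc Qᵀ, hQ, Matrix.one_mul, hQ₀]
    rw [Matrix.mul_assoc, trace_mul_comm, Matrix.mul_assoc]
    exact hP.trace_mul_le_trace hQQ₀

theorem bures_sq_eq_procrustes_sq (M N : ℕ) (X Y : Matrix (Fin M) (Fin N) ℝ) :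
    IsLeast {t : ℝ | ∃ Q : Matrix (Fin N) (Fin N) ℝ, Qᵀ * Q = 1 ∧ t = (frobNorm (X - Y * Q)) ^ 2}
      (Matrix.trace (X * Xᵀ) + Matrix.trace (Y * Yᵀ) - 2 * fidelity (psd_gram X) (psd_gram Y)) := by
  rw [fidelity_gram_eq_nuclearNorm]
  obtain ⟨⟨Q₀, hQ₀, hmax⟩, hle⟩ := isGreatest_nuclearNorm_trace_mul_orthogonal (Xᵀ * Y)
  refine ⟨⟨Q₀, hQ₀, by rw [frobNorm_sq, trace_transpose_mul_self_sub_mul X Y hQ₀, hmax]⟩, ?_⟩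
  rintro _ ⟨Q, hQ, rfl⟩
  rw [frobNorm_sq, trace_transpose_mul_self_sub_mul X Y hQ]
  linarith [hle ⟨Q, hQ, rfl⟩]
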